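/- For every finite word x over the alphabet Θ = {H, C, h, c, D, E, F, S} (hamburger, cheeseburger, hamburger order, cheeseburger order, duplicate burger, opposite burger, flexible order, stale order), there exists a unique reduced word R(x) equivalent to x modulo the burger relations (order fulfillment: Cc = Hh = ∅, commutation: Ch = hC, Hc = cH, and the identification relations HF = Hh = ∅, CF = Cc = ∅, HS = Hc, CS = Ch, HD = HH, CD = CC, HE = HC, CE = CH), where a word is reduced if all of its orders, D's, and E's lie to the left of all of its H's and C's. -/

import Mathlib

open scoped ENNReal NNReal

inductive BSym : Type
  | hb | cb | ho | co | db | eb | fo | so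
deriving DecidableEq

instance : MeasurableSpace BSym := ⊤

abbrev Word := List BSym

def isBurger : BSym → Bool
  | BSym.hb => true | BSym.cb => true | BSym.db => true | BSym.eb => true
  | _ => false

def isHC : BSym → Bool
  | BSym.hb => true | BSym.cb => true | _ => false

def rules : List (Word × Word) :=
  [([BSym.cb, BSym.co], []), ([BSym.hb, BSym.ho], []),
   ([BSym.cb, BSym.ho], [BSym.ho, BSym.cb]), ([BSym.hb, BSym.co], [BSym.co, BSym.hb]),
   ([BSym.hb, BSym.fo], []), ([BSym.cb, BSym.fo], []),
   ([BSym.hb, BSym.so], [BSym.hb, BSym.co]), ([BSym.cb, BSym.so], [BSym.cb, BSym.ho]),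
   ([BSym.hb, BSym.db], [BSym.hb, BSym.hb]), ([BSym.cb, BSym.db], [BSym.cb, BSym.cb]),
   ([BSym.hb, BSym.eb], [BSym.hb, BSym.cb]), ([BSym.cb, BSym.eb], [BSym.cb, BSym.hb])]

inductive Step : Word → Word → Prop
  | mk (u v l r : Word) (hlr : (l, r) ∈ rules) : Step (u ++ l ++ v) (u ++ r ++ v)

def WEquiv : Word → Word → Prop := Relation.EqvGen Step

def Reduced (x : Word) : Prop :=
  ∃ u v : Word, x = u ++ v ∧ (∀ a ∈ u, isHC a = false) ∧ ∀ a ∈ v, isHC a = true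

def NB (x : Word) : ℕ := (x.filter isBurger).length
def NO (x : Word) : ℕ := (x.filter (fun a => !isBurger a)).length
def netC (x : Word) : ℤ := (NB x : ℤ) - (NO x : ℤ)
def NHC (x : Word) : ℕ := (x.filter isHC).length
def NDS (x : Word) : ℕ := x.count BSym.db + x.count BSym.so
def discrep (x : Word) : ℤ :=
  ((x.count BSym.hb : ℤ) - (x.count BSym.ho : ℤ)) - ((x.count BSym.cb : ℤ) - (x.count BSym.co : ℤ))

def wnd {Ω : Type*} (X : ℤ → Ω → BSym) (ω : Ω) (a b : ℤ) : Word :=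
  (List.range (b + 1 - a).toNat).map fun i => X (a + i) ω

def fwd {Ω : Type*} (X : ℕ → Ω → BSym) (ω : Ω) (n : ℕ) : Word :=
  (List.range n).map fun i => X (i + 1) ω
/-! ### Auxiliary reduction machinery -/

def flipB : BSym → BSym
  | BSym.hb => BSym.cb
  | BSym.cb => BSym.hb
  | a => a

/-- Remove the first occurrence of `b` in a list, if any. -/
def cancelB (b : BSym) : Word → Option Word
  | [] => none
  | x :: xs => if x = b then some xs else Option.map (x :: ·) (cancelB b xs)

/-- Push an order `o` (which cancels burger `b`) onto the state. -/
def pushO (b o : BSym) (u rv : Word) : Word × Word :=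
  match cancelB b rv with
  | some rv' => (u, rv')
  | none => (u ++ [o], rv)

/-- Process one symbol.  State: `(u, rv)` where `u` is the list of non-HC symbols
and `rv` is the list of burgers in reverse order. -/
def push (s : Word × Word) (a : BSym) : Word × Word :=
  match s, a with
  | (u, rv), BSym.hb => (u, BSym.hb :: rv)
  | (u, rv), BSym.cb => (u, BSym.cb :: rv)
  | (u, rv), BSym.ho => pushO BSym.hb BSym.ho u rv
  | (u, rv), BSym.co => pushO BSym.cb BSym.co u rv
  | (u, rv), BSym.fo =>
      match rv with
      | [] => (u ++ [BSym.fo], [])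
      | _ :: rv' => (u, rv')
  | (u, rv), BSym.so =>
      match rv with
      | [] => (u ++ [BSym.so], [])
      | BSym.hb :: _ => pushO BSym.cb BSym.co u rv
      | _ :: _ => pushO BSym.hb BSym.ho u rv
  | (u, rv), BSym.db =>
      match rv with
      | [] => (u ++ [BSym.db], [])
      | b :: rv' => (u, b :: b :: rv')
  | (u, rv), BSym.eb =>
      match rv with
      | [] => (u ++ [BSym.eb], [])
      | b :: rv' => (u, flipB b :: b :: rv')

def stateWord (s : Word × Word) : Word := s.1 ++ s.2.reverse

def Rfun (x : Word) : Word := stateWord (x.foldl push ([], []))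

/-- Invariant on states. -/
def SInv (s : Word × Word) : Prop :=
  (∀ a ∈ s.1, isHC a = false) ∧ (∀ a ∈ s.2, isHC a = true)

lemma isHC_eq (a : BSym) (h : isHC a = true) : a = BSym.hb ∨ a = BSym.cb := by
  cases a <;> simp_all [isHC]

lemma cancelB_mem {b : BSym} : ∀ {rv rv' : Word}, cancelB b rv = some rv' →
    ∀ a ∈ rv', a ∈ rv := by
  intro rv
  induction rv with
  | nil => intro rv' h; simp [cancelB] at h
  | cons x xs ih =>
    intro rv' h a ha
    by_cases hx : x = b
    · simp [cancelB, hx] at h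
      subst h; exact List.mem_cons_of_mem _ ha
    · simp [cancelB, hx] at h
      obtain ⟨t, ht, rfl⟩ := h
      rcases List.mem_cons.mp ha with rfl | ha
      · exact List.mem_cons_self
      · exact List.mem_cons_of_mem _ (ih ht a ha)

lemma inv_push {s : Word × Word} (h : SInv s) (a : BSym) : SInv (push s a) := by
  obtain ⟨u, rv⟩ := s
  obtain ⟨h1, h2⟩ := h
  have hO : ∀ (b o : BSym), isHC o = false → SInv (pushO b o u rv) := by
    intro b o ho
    unfold pushO
    cases hc : cancelB b rv with
    | some rv' =>
      exact ⟨h1, fun a ha => h2 a (cancelB_mem hc a ha)⟩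
    | none =>
      refine ⟨fun a ha => ?_, h2⟩
      rcases List.mem_append.mp ha with ha | ha
      · exact h1 a ha
      · simp at ha; subst ha; exact ho
  cases a with
  | hb =>
    refine ⟨h1, fun a ha => ?_⟩
    rcases List.mem_cons.mp ha with rfl | ha
    · rfl
    · exact h2 a ha
  | cb =>
    refine ⟨h1, fun a ha => ?_⟩
    rcases List.mem_cons.mp ha with rfl | ha
    · rfl
    · exact h2 a ha
  | ho => exact hO _ _ rfl
  | co => exact hO _ _ rfl
  | fo =>
    cases rv with
    | nil =>
      refine ⟨fun a ha => ?_, fun a ha => absurd ha List.not_mem_nil⟩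
      rcases List.mem_append.mp ha with ha | ha
      · exact h1 a ha
      · simp at ha; subst ha; rfl
    | cons b rv' => exact ⟨h1, fun a ha => h2 a (List.mem_cons_of_mem _ ha)⟩
  | so =>
    cases rv with
    | nil =>
      refine ⟨fun a ha => ?_, fun a ha => absurd ha List.not_mem_nil⟩
      rcases List.mem_append.mp ha with ha | ha
      · exact h1 a ha
      · simp at ha; subst ha; rfl
    | cons b rv' =>
      cases b <;> exact hO _ _ rfl
  | db =>
    cases rv with
    | nil =>
      refine ⟨fun a ha => ?_, fun a ha => absurd ha List.not_mem_nil⟩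
      rcases List.mem_append.mp ha with ha | ha
      · exact h1 a ha
      · simp at ha; subst ha; rfl
    | cons b rv' =>
      refine ⟨h1, fun a ha => ?_⟩
      have hb := h2 b (List.mem_cons_self)
      rcases List.mem_cons.mp ha with rfl | ha
      · exact hb
      · rcases List.mem_cons.mp ha with rfl | ha
        · exact hb
        · exact h2 a (List.mem_cons_of_mem _ ha)
  | eb =>
    cases rv with
    | nil =>
      refine ⟨fun a ha => ?_, fun a ha => absurd ha List.not_mem_nil⟩
      rcases List.mem_append.mp ha with ha | ha
      · exact h1 a ha
      · simp at ha; subst ha; rfl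
    | cons b rv' =>
      refine ⟨h1, fun a ha => ?_⟩
      have hb := h2 b (List.mem_cons_self)
      rcases List.mem_cons.mp ha with rfl | ha
      · rcases isHC_eq b hb with rfl | rfl <;> rfl
      · rcases List.mem_cons.mp ha with rfl | ha
        · exact hb
        · exact h2 a (List.mem_cons_of_mem _ ha)

lemma inv_foldl {s : Word × Word} (h : SInv s) (x : Word) :
    SInv (x.foldl push s) := by
  induction x generalizing s with
  | nil => exact h
  | cons a x ih => exact ih (inv_push h a)

/-! ### Equivalence lemmas -/

lemma wequiv_refl (w : Word) : WEquiv w w := Relation.EqvGen.refl w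

lemma wequiv_symm {a b : Word} (h : WEquiv a b) : WEquiv b a := Relation.EqvGen.symm _ _ h

lemma wequiv_trans {a b c : Word} (h1 : WEquiv a b) (h2 : WEquiv b c) : WEquiv a c :=
  Relation.EqvGen.trans _ _ _ h1 h2

lemma step_app_right {a b : Word} (h : Step a b) (w : Word) : Step (a ++ w) (b ++ w) := by
  obtain ⟨u, v, l, r, hlr⟩ := h
  have := Step.mk u (v ++ w) l r hlr
  simpa [List.append_assoc] using this

lemma step_app_left {a b : Word} (h : Step a b) (w : Word) : Step (w ++ a) (w ++ b) := by
  obtain ⟨u, v, l, r, hlr⟩ := h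
  have := Step.mk (w ++ u) v l r hlr
  simpa [List.append_assoc] using this

lemma wequiv_app_right {a b : Word} (h : WEquiv a b) (w : Word) :
    WEquiv (a ++ w) (b ++ w) := by
  induction h with
  | rel x y hxy => exact Relation.EqvGen.rel _ _ (step_app_right hxy w)
  | refl x => exact wequiv_refl _
  | symm x y _ ih => exact wequiv_symm ih
  | trans x y z _ _ ih1 ih2 => exact wequiv_trans ih1 ih2

lemma wequiv_of_rule {l r : Word} (h : (l, r) ∈ rules) (p s : Word) :
    WEquiv (p ++ l ++ s) (p ++ r ++ s) :=
  Relation.EqvGen.rel _ _ (Step.mk p s l r h)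

/-- Key cancellation lemma: an order `o` at the right end moves left through
burgers `b'` and cancels the first `b` it finds (scanning leftwards). -/
lemma cancel_equiv (b b' o : BSym) (hne : b' ≠ b)
    (hcancel : ([b, o], ([] : Word)) ∈ rules)
    (hcomm : ([b', o], [o, b']) ∈ rules)
    (u : Word) : ∀ rv : Word, (∀ x ∈ rv, x = b ∨ x = b') →
    WEquiv (u ++ rv.reverse ++ [o]) (stateWord (pushO b o u rv)) := by
  intro rv
  induction rv with
  | nil =>
    intro _
    simp [pushO, cancelB, stateWord]
    exact wequiv_refl _
  | cons x xs ih =>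
    intro hmem
    have hx := hmem x (List.mem_cons_self)
    by_cases hxb : x = b
    · -- head is b : cancel here
      subst hxb
      have h1 : WEquiv (u ++ (x :: xs).reverse ++ [o]) (u ++ xs.reverse) := by
        have := wequiv_of_rule hcancel (u ++ xs.reverse) []
        simpa [List.append_assoc] using this
      have h4 : pushO x o u (x :: xs) = (u, xs) := by
        simp [pushO, cancelB]
      rw [h4]
      exact h1
    · -- head is b' : commute o past it
      have hxb' : x = b' := (hx.resolve_left hxb)
      subst hxb'
      have h1 : WEquiv (u ++ (x :: xs).reverse ++ [o])
          ((u ++ xs.reverse ++ [o]) ++ [x]) := by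
        have := wequiv_of_rule hcomm (u ++ xs.reverse) []
        simpa [List.append_assoc] using this
      have h2 := ih (fun y hy => hmem y (List.mem_cons_of_mem _ hy))
      have h3 := wequiv_app_right h2 [x]
      refine wequiv_trans h1 (wequiv_trans h3 ?_)
      unfold pushO
      cases hc : cancelB b xs with
      | some rv' =>
        have h5 : cancelB b (x :: xs) = some (x :: rv') := by
          simp [cancelB, hxb, hc]
        rw [h5]
        simp only [stateWord, List.reverse_cons, List.append_assoc]
        exact wequiv_refl _
      | none =>
        have h5 : cancelB b (x :: xs) = none := by
          simp [cancelB, hxb, hc]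
        rw [h5]
        simp only [stateWord, List.reverse_cons, List.append_assoc]
        exact wequiv_refl _

lemma push_equiv {s : Word × Word} (hs : SInv s) (a : BSym) :
    WEquiv (stateWord s ++ [a]) (stateWord (push s a)) := by
  obtain ⟨u, rv⟩ := s
  have hrv : ∀ x ∈ rv, x = BSym.hb ∨ x = BSym.cb := fun x hx => isHC_eq x (hs.2 x hx)
  have hho := cancel_equiv BSym.hb BSym.cb BSym.ho (by decide) (by decide) (by decide) u rv hrv
  have hco := cancel_equiv BSym.cb BSym.hb BSym.co (by decide) (by decide) (by decide) u rv
    (fun x hx => (hrv x hx).symm)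
  cases a with
  | hb => simp [push, stateWord, List.append_assoc]; exact wequiv_refl _
  | cb => simp [push, stateWord, List.append_assoc]; exact wequiv_refl _
  | ho => simpa [push, stateWord, List.append_assoc] using hho
  | co => simpa [push, stateWord, List.append_assoc] using hco
  | fo =>
    cases rv with
    | nil => simp [push, stateWord]; exact wequiv_refl _
    | cons x xs =>
      rcases hrv x (List.mem_cons_self) with rfl | rfl
      · have := wequiv_of_rule (l := [BSym.hb, BSym.fo]) (r := []) (by decide)
          (u ++ xs.reverse) []
        simpa [push, stateWord, List.append_assoc] using this
      · have := wequiv_of_rule (l := [BSym.cb, BSym.fo]) (r := []) (by decide)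
          (u ++ xs.reverse) []
        simpa [push, stateWord, List.append_assoc] using this
  | so =>
    cases rv with
    | nil => simp [push, stateWord]; exact wequiv_refl _
    | cons x xs =>
      rcases hrv x (List.mem_cons_self) with rfl | rfl
      · have h1 : WEquiv (stateWord (u, BSym.hb :: xs) ++ [BSym.so])
            (u ++ (BSym.hb :: xs).reverse ++ [BSym.co]) := by
          have := wequiv_of_rule (l := [BSym.hb, BSym.so]) (r := [BSym.hb, BSym.co])
            (by decide) (u ++ xs.reverse) []
          simpa [stateWord, List.append_assoc] using this
        have h2 := cancel_equiv BSym.cb BSym.hb BSym.co (by decide) (by decide) (by decide)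
          u (BSym.hb :: xs) (fun y hy => (hrv y hy).symm)
        exact wequiv_trans h1 h2
      · have h1 : WEquiv (stateWord (u, BSym.cb :: xs) ++ [BSym.so])
            (u ++ (BSym.cb :: xs).reverse ++ [BSym.ho]) := by
          have := wequiv_of_rule (l := [BSym.cb, BSym.so]) (r := [BSym.cb, BSym.ho])
            (by decide) (u ++ xs.reverse) []
          simpa [stateWord, List.append_assoc] using this
        have h2 := cancel_equiv BSym.hb BSym.cb BSym.ho (by decide) (by decide) (by decide)
          u (BSym.cb :: xs) hrv
        exact wequiv_trans h1 h2
  | db =>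
    cases rv with
    | nil => simp [push, stateWord]; exact wequiv_refl _
    | cons x xs =>
      rcases hrv x (List.mem_cons_self) with rfl | rfl
      · have := wequiv_of_rule (l := [BSym.hb, BSym.db]) (r := [BSym.hb, BSym.hb])
          (by decide) (u ++ xs.reverse) []
        simpa [push, stateWord, List.append_assoc] using this
      · have := wequiv_of_rule (l := [BSym.cb, BSym.db]) (r := [BSym.cb, BSym.cb])
          (by decide) (u ++ xs.reverse) []
        simpa [push, stateWord, List.append_assoc] using this
  | eb =>
    cases rv with
    | nil => simp [push, stateWord]; exact wequiv_refl _
    | cons x xs =>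
      rcases hrv x (List.mem_cons_self) with rfl | rfl
      · have := wequiv_of_rule (l := [BSym.hb, BSym.eb]) (r := [BSym.hb, BSym.cb])
          (by decide) (u ++ xs.reverse) []
        simpa [push, stateWord, flipB, List.append_assoc] using this
      · have := wequiv_of_rule (l := [BSym.cb, BSym.eb]) (r := [BSym.cb, BSym.hb])
          (by decide) (u ++ xs.reverse) []
        simpa [push, stateWord, flipB, List.append_assoc] using this

lemma foldl_equiv {s : Word × Word} (hs : SInv s) (x : Word) :
    WEquiv (stateWord s ++ x) (stateWord (x.foldl push s)) := by
  induction x generalizing s with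
  | nil => simpa using wequiv_refl (stateWord s)
  | cons a x ih =>
    have h1 : stateWord s ++ (a :: x) = (stateWord s ++ [a]) ++ x := by simp
    rw [h1]
    have h2 := wequiv_app_right (push_equiv hs a) x
    exact wequiv_trans h2 (ih (inv_push hs a))

lemma equiv_Rfun (x : Word) : WEquiv x (Rfun x) := by
  have := foldl_equiv (s := ([], [])) ⟨by simp, by simp⟩ x
  simpa [stateWord, Rfun] using this

/-! ### `Rfun` is invariant under rules -/

lemma foldl_rule (l r : Word) (h : (l, r) ∈ rules) (u rv : Word) :
    l.foldl push (u, rv) = r.foldl push (u, rv) := by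
  simp only [rules, List.mem_cons, List.not_mem_nil, or_false] at h
  rcases h with h | h | h | h | h | h | h | h | h | h | h | h <;>
    (obtain ⟨h1, h2⟩ := Prod.mk.injEq .. ▸ h; subst h1; subst h2) <;>
    simp only [List.foldl, push, pushO, cancelB, flipB, if_pos rfl, reduceIte] <;>
    first
      | rfl
      | (cases hc1 : cancelB BSym.hb rv <;> cases hc2 : cancelB BSym.cb rv <;>
          simp [hc1, hc2])

lemma foldl_push_append (s : Word × Word) (a b : Word) :
    (a ++ b).foldl push s = b.foldl push (a.foldl push s) := List.foldl_append ..

lemma Rfun_step {a b : Word} (h : Step a b) : Rfun a = Rfun b := by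
  obtain ⟨u, v, l, r, hlr⟩ := h
  unfold Rfun
  rw [foldl_push_append, foldl_push_append, foldl_push_append, foldl_push_append]
  obtain ⟨u', rv'⟩ := u.foldl push (([], []) : Word × Word)
  rw [foldl_rule l r hlr u' rv']

lemma Rfun_wequiv {a b : Word} (h : WEquiv a b) : Rfun a = Rfun b := by
  induction h with
  | rel x y hxy => exact Rfun_step hxy
  | refl x => rfl
  | symm x y _ ih => exact ih.symm
  | trans x y z _ _ ih1 ih2 => exact ih1.trans ih2

/-! ### `Rfun` fixes reduced words, and is reduced -/

lemma foldl_orders (u : Word) (hu : ∀ a ∈ u, isHC a = false) (w : Word) :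
    u.foldl push (w, []) = (w ++ u, []) := by
  induction u generalizing w with
  | nil => simp
  | cons a u ih =>
    have ha := hu a (List.mem_cons_self)
    have hrest : ∀ a ∈ u, isHC a = false := fun a hx => hu a (List.mem_cons_of_mem _ hx)
    have hpush : push (w, []) a = (w ++ [a], []) := by
      cases a <;> simp_all [push, pushO, cancelB, isHC]
    rw [List.foldl_cons, hpush, ih hrest]
    simp

lemma foldl_burgers (v : Word) (hv : ∀ a ∈ v, isHC a = true) (w rv : Word) :
    v.foldl push (w, rv) = (w, v.reverse ++ rv) := by
  induction v generalizing rv with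
  | nil => simp
  | cons a v ih =>
    have ha := hv a (List.mem_cons_self)
    have hrest : ∀ a ∈ v, isHC a = true := fun a hx => hv a (List.mem_cons_of_mem _ hx)
    have hpush : push (w, rv) a = (w, a :: rv) := by
      rcases isHC_eq a ha with rfl | rfl <;> rfl
    rw [List.foldl_cons, hpush, ih hrest]
    simp

lemma Rfun_reduced_fixed {r : Word} (h : Reduced r) : Rfun r = r := by
  obtain ⟨u, v, rfl, hu, hv⟩ := h
  unfold Rfun
  rw [foldl_push_append, foldl_orders u hu [], foldl_burgers v hv]
  simp [stateWord]

lemma Rfun_is_reduced (x : Word) : Reduced (Rfun x) := by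
  have hInv : SInv (x.foldl push ([], [])) := inv_foldl ⟨by simp, by simp⟩ x
  refine ⟨(x.foldl push ([], [])).1, (x.foldl push ([], [])).2.reverse, rfl, hInv.1, ?_⟩
  intro a ha
  exact hInv.2 a (List.mem_reverse.mp ha)

/-- For every finite word over the burger alphabet there exists a unique
reduced word equivalent to it modulo the burger relations. -/
theorem burger_reduction_exists_unique (x : Word) :
    ∃! r : Word, Reduced r ∧ WEquiv x r := by
  refine ⟨Rfun x, ⟨Rfun_is_reduced x, equiv_Rfun x⟩, ?_⟩
  rintro r ⟨hr, hxr⟩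
  have h1 : Rfun x = Rfun r := Rfun_wequiv hxr
  rw [← Rfun_reduced_fixed hr, h1]
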